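/- If Σ : [0,∞) → ℝ^{p×p} solves Σ̇ = c(t)c(t)ᵀ - k_T Σ + σI with Σ(0) symmetric positive definite, k_T > 0, σ > 0, then Σ(t) is symmetric and Σ(t) ⪰ (σ/k_T)(1 - e^{-k_T t})I for all t ≥ 0; in particular Σ(t) is positive definite for all t ≥ 0. -/

import Mathlib

/-!
For a fixed vector `x`, the quadratic form `q s = xᵀ Σ(s) x` satisfies
`q' = (c ⬝ x)² - k q + σ |x|² ≥ -k q + σ |x|²`, so the lower Grönwall comparison gives
`q t ≥ e^{-kt} q 0 + (σ/k)(1 - e^{-kt}) |x|²`, i.e.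
`Σ(t) - (σ/k)(1 - e^{-kt}) I ⪰ e^{-kt} Σ(0) ≻ 0`.
Symmetry comes from the same comparison: the skew part `Σ j i - Σ i j` solves `f' = -k f`
with `f 0 = 0`.
-/

open Real Matrix

theorem gronwallBound_neg (δ K ε x : ℝ) :
    gronwallBound (-δ) K (-ε) x = -gronwallBound δ K ε x := by
  unfold gronwallBound
  split_ifs <;> ring

theorem gronwallBound_le_of_hasDerivAt {f f' : ℝ → ℝ} {K ε : ℝ}
    (hf : ∀ x, HasDerivAt f (f' x) x) (bound : ∀ x, K * f x + ε ≤ f' x) {t : ℝ}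
    (ht : 0 ≤ t) :
    gronwallBound (f 0) K ε t ≤ f t := by
  have hneg := le_gronwallBound_of_liminf_deriv_right_le (f := fun x => -f x) (f' := fun x => -f' x)
    (δ := -f 0) (K := K) (ε := -ε) (a := 0) (b := t)
    (fun x _ => (hf x).neg.continuousAt.continuousWithinAt)
    (fun x _ _ hr => (hf x).neg.hasDerivWithinAt.liminf_right_slope_le hr) le_rfl
    (fun x _ => by linarith [bound x]) t ⟨ht, le_rfl⟩
  rw [sub_zero, gronwallBound_neg] at hneg
  exact neg_le_neg_iff.mp hneg

theorem hasDerivAt_dotProduct_mulVec {𝕜 m n : Type*} [NontriviallyNormedField 𝕜] [Fintype m]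
    [Fintype n] {A : 𝕜 → Matrix m n 𝕜} {A' : Matrix m n 𝕜} {t : 𝕜}
    (hA : ∀ i j, HasDerivAt (fun s => A s i j) (A' i j) t) (x : m → 𝕜) (y : n → 𝕜) :
    HasDerivAt (fun s => x ⬝ᵥ (A s *ᵥ y)) (x ⬝ᵥ (A' *ᵥ y)) t := by
  simp only [dotProduct, mulVec, Finset.mul_sum]
  exact HasDerivAt.fun_sum fun i _ => HasDerivAt.fun_sum fun j _ =>
    ((hA i j).mul_const (y j)).const_mul (x i)

def SolvesCovarianceODE {n : Type*} [DecidableEq n] (k σ : ℝ) (u : ℝ → n → ℝ)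
    (S : ℝ → Matrix n n ℝ) : Prop :=
  ∀ t i j, HasDerivAt (fun s => S s i j)
    (u t i * u t j - k * S t i j + σ * (1 : Matrix n n ℝ) i j) t

namespace SolvesCovarianceODE

variable {n : Type*} [DecidableEq n] {k σ : ℝ} {u : ℝ → n → ℝ}
  {S : ℝ → Matrix n n ℝ}

theorem isSymm (hS : SolvesCovarianceODE k σ u S) (hS0 : (S 0).IsSymm) {t : ℝ} (ht : 0 ≤ t) :
    (S t).IsSymm := by
  have skew_nonneg : ∀ i j, 0 ≤ S t j i - S t i j := by
    intro i j
    have hd : ∀ s, HasDerivAt (fun s => S s j i - S s i j) (-k * (S s j i - S s i j)) s :=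
      fun s => ((hS s j i).sub (hS s i j)).congr_deriv (by simp only [one_apply, eq_comm]; ring)
    simpa [gronwallBound_ε0_δ0, hS0.apply] using
      gronwallBound_le_of_hasDerivAt hd (fun s => (add_zero _).le) ht
  exact IsSymm.ext fun i j =>
    le_antisymm (sub_nonneg.mp (skew_nonneg j i)) (sub_nonneg.mp (skew_nonneg i j))

variable [Fintype n]

theorem hasDerivAt_dotProduct_mulVec (hS : SolvesCovarianceODE k σ u S) (x : n → ℝ) (t : ℝ) :
    HasDerivAt (fun s => x ⬝ᵥ (S s *ᵥ x))
      ((u t ⬝ᵥ x) ^ 2 - k * (x ⬝ᵥ (S t *ᵥ x)) + σ * (x ⬝ᵥ x)) t := by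
  refine (_root_.hasDerivAt_dotProduct_mulVec (A' := vecMulVec (u t) (u t) - k • S t + σ • 1)
    (fun i j => by simpa [vecMulVec_apply] using hS t i j) x x).congr_deriv ?_
  simp only [add_mulVec, sub_mulVec, vecMulVec_mulVec, smul_mulVec, one_mulVec, dotProduct_add,
    dotProduct_sub, dotProduct_smul, smul_eq_mul, op_smul_eq_smul, dotProduct_comm x (u t)]
  ring

theorem exp_mul_add_le_dotProduct_mulVec (hS : SolvesCovarianceODE k σ u S) (hk : k ≠ 0)
    (x : n → ℝ) {t : ℝ} (ht : 0 ≤ t) :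
    exp (-k * t) * (x ⬝ᵥ (S 0 *ᵥ x)) + σ / k * (1 - exp (-k * t)) * (x ⬝ᵥ x)
      ≤ x ⬝ᵥ (S t *ᵥ x) := by
  have h := gronwallBound_le_of_hasDerivAt (K := -k) (ε := σ * (x ⬝ᵥ x))
    (hS.hasDerivAt_dotProduct_mulVec x)
    (fun s => by nlinarith [sq_nonneg (u s ⬝ᵥ x)]) ht
  rw [gronwallBound_of_K_ne_0 (neg_ne_zero.mpr hk)] at h
  convert h using 1
  field_simp
  ring

theorem posSemidef_sub_smul_one_sub_smul (hS : SolvesCovarianceODE k σ u S) (hk : k ≠ 0)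
    (hS0 : (S 0).IsSymm) {t : ℝ} (ht : 0 ≤ t) :
    (S t - (σ / k * (1 - exp (-k * t))) • 1 - exp (-k * t) • S 0).PosSemidef := by
  refine .of_dotProduct_mulVec_nonneg ?_ fun x => ?_
  · simpa using ((hS.isSymm hS0 ht).sub (isSymm_one.smul _)).sub (hS0.smul _)
  · simp only [star_trivial, sub_mulVec, smul_mulVec, one_mulVec, dotProduct_sub,
      dotProduct_smul, smul_eq_mul]
    linarith [hS.exp_mul_add_le_dotProduct_mulVec hk x ht]

end SolvesCovarianceODE

theorem stmt16_general {p : ℕ} (kT σ : ℝ) (hkT : 0 < kT) (hσ : 0 < σ)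
    (c : ℝ → EuclideanSpace ℝ (Fin p))
    (S : ℝ → Matrix (Fin p) (Fin p) ℝ)
    (hS : ∀ t i j, HasDerivAt (fun s => S s i j)
      (c t i * c t j - kT * S t i j + σ * (1 : Matrix (Fin p) (Fin p) ℝ) i j) t)
    (hS0pd : (S 0).PosDef) :
    ∀ t, 0 ≤ t → (S t).IsSymm ∧
      (S t - ((σ / kT) * (1 - Real.exp (-kT * t))) • (1 : Matrix (Fin p) (Fin p) ℝ)).PosSemidef ∧
      (S t).PosDef := by
  intro t ht
  have hsol : SolvesCovarianceODE kT σ (fun t => (c t).ofLp) S := hS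
  have hS0 : (S 0).IsSymm := isHermitian_iff_isSymm.mp hS0pd.isHermitian
  have hcoeff : 0 ≤ σ / kT * (1 - exp (-kT * t)) :=
    mul_nonneg (div_pos hσ hkT).le (sub_nonneg.mpr (exp_le_one_iff.mpr (by nlinarith)))
  have hrest := hsol.posSemidef_sub_smul_one_sub_smul hkT.ne' hS0 ht
  have hdecay : (exp (-kT * t) • S 0).PosDef := hS0pd.smul (exp_pos _)
  refine ⟨hsol.isSymm hS0 ht, ?_, ?_⟩
  · simpa using PosSemidef.add hrest hdecay.posSemidef
  · simpa using (PosDef.posSemidef_add hrest hdecay).add_posSemidef (PosSemidef.one.smul hcoeff)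

theorem stmt16 {p : ℕ} (kT σ : ℝ) (hkT : 0 < kT) (hσ : 0 < σ)
    (c : ℝ → EuclideanSpace ℝ (Fin p)) (hcont : Continuous c)
    (S : ℝ → Matrix (Fin p) (Fin p) ℝ)
    (hS : ∀ t i j, HasDerivAt (fun s => S s i j)
      (c t i * c t j - kT * S t i j + σ * (1 : Matrix (Fin p) (Fin p) ℝ) i j) t)
    (hS0sym : (S 0).IsSymm) (hS0pd : (S 0).PosDef) :
    ∀ t, 0 ≤ t → (S t).IsSymm ∧
      (S t - ((σ / kT) * (1 - Real.exp (-kT * t))) • (1 : Matrix (Fin p) (Fin p) ℝ)).PosSemidef ∧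
      (S t).PosDef :=
  stmt16_general kT σ hkT hσ c S hS hS0pd
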